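/- Let C be an ideal of R[z]/(z^n - 1) where R = Z4[v]/(v^2), and let φ: R[z]/(z^n-1) → Z4[z]/(z^n-1) be induced by reduction modulo v. Then φ(C) is an ideal of Z4[z]/(z^n - 1), and the kernel of the restriction of φ to C equals v·D for some ideal D of Z4[z]/(z^n-1) (viewing v·Z4[z]/(z^n-1) as a Z4[z]/(z^n-1)-module). -/

import Mathlib

open Polynomial

/-- The ring `R = Z₄[v]/(v²)`. -/
abbrev Rv : Type := Polynomial (ZMod 4) ⧸ Ideal.span {(X : Polynomial (ZMod 4)) ^ 2}

noncomputable instance : CommRing Rv := Ideal.Quotient.commRing _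

/-- The image of `v` in `R`. -/
noncomputable def vR : Rv := Ideal.Quotient.mk _ X

/-- The embedding `Z₄ → R`. -/
noncomputable def ι4R : ZMod 4 →+* Rv :=
  (Ideal.Quotient.mk (Ideal.span {(X : Polynomial (ZMod 4)) ^ 2})).comp Polynomial.C

/-- `R[z]/(zⁿ - 1)`. -/
abbrev Rz (n : ℕ) : Type := Polynomial Rv ⧸ Ideal.span {(X : Polynomial Rv) ^ n - 1}

/-- `Z₄[z]/(zⁿ - 1)`. -/
abbrev Z4z (n : ℕ) : Type :=
  Polynomial (ZMod 4) ⧸ Ideal.span {(X : Polynomial (ZMod 4)) ^ n - 1}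

/-- Projection `R[z] → R[z]/(zⁿ - 1)`. -/
noncomputable def πR (n : ℕ) : Polynomial Rv →+* Rz n := Ideal.Quotient.mk _

/-- Projection `Z₄[z] → Z₄[z]/(zⁿ - 1)`. -/
noncomputable def π4 (n : ℕ) : Polynomial (ZMod 4) →+* Z4z n := Ideal.Quotient.mk _

/-- The image of `v` in `R[z]/(zⁿ - 1)`. -/
noncomputable def vz (n : ℕ) : Rz n := πR n (Polynomial.C vR)

/- The reduction map `φ : R[z]/(zⁿ - 1) → Z₄[z]/(zⁿ - 1)` is split by the inclusion `ι`, and every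
element of `R[z]/(zⁿ - 1)` is `ι a + v ι b` since `v² = 0`. Hence `φ` is onto, so `φ(C)` is an
ideal, and `ker φ = v · ι(Z₄[z]/(zⁿ - 1))`; the kernel of `φ` on `C` is then `v · ι(D)` with
`D = {d | v ι d ∈ C}`, the preimage under `ι` of the colon ideal `C : v`. -/

theorem Ideal.coe_map_of_surjective {A B : Type*} [Semiring A] [Semiring B] {φ : A →+* B}
    (hφ : Function.Surjective φ) (I : Ideal A) : (I.map φ : Set B) = φ '' I :=
  Set.ext fun _ => Ideal.mem_map_iff_of_surjective φ hφ

theorem eq_zero_iff_exists_eq_mul_of_split {A B : Type*} [Semiring A] [Semiring B]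
    {φ : A →+* B} {ι : B →+* A} {v : A} (hφι : Function.LeftInverse φ ι) (hv : φ v = 0)
    (hdecomp : ∀ x, ∃ a b, x = ι a + v * ι b) {x : A} :
    φ x = 0 ↔ ∃ d, x = v * ι d := by
  constructor
  · intro hx
    obtain ⟨a, b, rfl⟩ := hdecomp x
    have ha : a = 0 := by simpa [hφι a, hv] using hx
    exact ⟨b, by rw [ha, map_zero, zero_add]⟩
  · rintro ⟨d, rfl⟩
    rw [map_mul, hv, zero_mul]

theorem mem_inf_ker_iff_of_split {A B : Type*} [CommSemiring A] [Semiring B]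
    {φ : A →+* B} {ι : B →+* A} {v : A} (hφι : Function.LeftInverse φ ι) (hv : φ v = 0)
    (hdecomp : ∀ x, ∃ a b, x = ι a + v * ι b) (I : Ideal A) (x : A) :
    (x ∈ I ∧ φ x = 0) ↔ ∃ d ∈ (I.colon {v}).comap ι, x = v * ι d := by
  simp only [Ideal.mem_comap, Submodule.mem_colon_singleton, smul_eq_mul,
    eq_zero_iff_exists_eq_mul_of_split hφι hv hdecomp]
  constructor
  · rintro ⟨hxI, d, rfl⟩
    exact ⟨d, by rwa [mul_comm], rfl⟩
  · rintro ⟨d, hd, rfl⟩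
    exact ⟨by rwa [mul_comm], d, rfl⟩

theorem Rv.exists_eq_add_vR_mul (r : Rv) : ∃ a b : ZMod 4, r = ι4R a + vR * ι4R b := by
  obtain ⟨f, rfl⟩ := Ideal.Quotient.mk_surjective r
  have hX2 : Ideal.Quotient.mk (Ideal.span {(X : (ZMod 4)[X]) ^ 2}) (X ^ 2) = 0 :=
    Ideal.Quotient.eq_zero_iff_mem.mpr (Ideal.mem_span_singleton_self _)
  have hf : f = X ^ 2 * f.divX.divX + (C (f.coeff 0) + X * C (f.coeff 1)) := by
    conv_lhs => rw [← X_mul_divX_add f, ← X_mul_divX_add f.divX, coeff_divX]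
    ring
  refine ⟨f.coeff 0, f.coeff 1, ?_⟩
  conv_lhs => rw [hf]
  rw [map_add, map_mul, hX2, zero_mul, zero_add]
  simp only [map_add, map_mul, ι4R, vR, RingHom.comp_apply]

theorem Polynomial.exists_eq_map_add_C_vR_mul_map (f : Rv[X]) :
    ∃ p q : (ZMod 4)[X], f = p.map ι4R + C vR * q.map ι4R := by
  induction f using Polynomial.induction_on' with
  | add f g hf hg =>
    obtain ⟨p₁, q₁, rfl⟩ := hf
    obtain ⟨p₂, q₂, rfl⟩ := hg
    exact ⟨p₁ + p₂, q₁ + q₂, by rw [Polynomial.map_add, Polynomial.map_add]; ring⟩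
  | monomial m r =>
    obtain ⟨a, b, rfl⟩ := Rv.exists_eq_add_vR_mul r
    exact ⟨monomial m a, monomial m b, by
      rw [Polynomial.map_monomial, Polynomial.map_monomial, C_mul_monomial, ← map_add]⟩

theorem Rz.exists_eq_add_vz_mul {n : ℕ} (ι : Z4z n →+* Rz n)
    (hι : ∀ p : (ZMod 4)[X], ι (π4 n p) = πR n (p.map ι4R)) (x : Rz n) :
    ∃ a b : Z4z n, x = ι a + vz n * ι b := by
  obtain ⟨f, rfl⟩ := Ideal.Quotient.mk_surjective x
  obtain ⟨p, q, rfl⟩ := f.exists_eq_map_add_C_vR_mul_map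
  exact ⟨π4 n p, π4 n q, by rw [hι, hι, vz, ← map_mul, ← map_add]; rfl⟩

theorem stmt8 (n : ℕ)
    (φ : Rz n →+* Z4z n)
    (hφ : ∀ p q : Polynomial (ZMod 4),
      φ (πR n (p.map ι4R + Polynomial.C vR * q.map ι4R)) = π4 n p)
    (ι : Z4z n →+* Rz n)
    (hι : ∀ p : Polynomial (ZMod 4), ι (π4 n p) = πR n (p.map ι4R))
    (I : Ideal (Rz n)) :
    (∃ E : Ideal (Z4z n), (E : Set (Z4z n)) = φ '' I) ∧
    (∃ D : Ideal (Z4z n), ∀ x : Rz n,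
      (x ∈ I ∧ φ x = 0) ↔ ∃ d ∈ D, x = vz n * ι d) := by
  have hφι : Function.LeftInverse φ ι := by
    intro a
    obtain ⟨p, rfl⟩ : ∃ p, π4 n p = a := Ideal.Quotient.mk_surjective a
    rw [hι]
    simpa only [Polynomial.map_zero, mul_zero, add_zero] using hφ p 0
  have hv : φ (vz n) = 0 := by
    rw [vz]
    simpa only [Polynomial.map_zero, Polynomial.map_one, zero_add, mul_one, map_zero] using hφ 0 1
  -- `A` is given explicitly: inferring it makes Lean unify a `CommSemiring` instance with the
  -- quotient's `Semiring` instance, which times out.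
  exact ⟨⟨I.map φ, I.coe_map_of_surjective hφι.surjective⟩,
    ⟨_, mem_inf_ker_iff_of_split (A := Rz n) hφι hv (Rz.exists_eq_add_vz_mul ι hι) I⟩⟩
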